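/- Let Γ̄ be an orbifold group with q = 1 (and g ≥ 1, or g = 0 and p ≥ 2), and write c₁ = s_ℓ⋯s₁ where s_ℓ⋯s₁ is the word w₀ of length ℓ with letters in the generating set 𝔖. Let ρ̄: Γ̄ → Homeo(S¹) be a (μ,τ,σ)-representation and let I₀ be a periodic gap of μ whose stabilizer {γ̄ ∈ Γ̄ : σ(γ̄)I₀ = I₀} is the cyclic subgroup generated by c₁. Define inductively I_i = σ(s_i)(I_{i−1}) for 1 ≤ i ≤ ℓ−1. Then the gaps I₀, I₁, …, I_{ℓ−1} are pairwise distinct. -/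

import Mathlib

open Set Filter Topology
open scoped commutatorElement

noncomputable section

namespace PAFlow

/-- The circle, realized as `ℝ / ℤ`. -/
abbrev S1 : Type := AddCircle (1 : ℝ)

instance {α : Type*} [TopologicalSpace α] : Group (α ≃ₜ α) where
  mul f g := g.trans f
  one := Homeomorph.refl α
  inv := Homeomorph.symm
  mul_assoc f g h := Homeomorph.ext fun _ => rfl
  one_mul f := Homeomorph.ext fun _ => rfl
  mul_one f := Homeomorph.ext fun _ => rfl
  inv_mul_cancel f := Homeomorph.ext fun x => f.symm_apply_apply x

/-- The canonical representative in `[0,1)` of a point of the circle. -/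
noncomputable def pos1 (x : S1) : ℝ := (AddCircle.equivIco 1 0 x : ℝ)

/-- The open positively-oriented arc from `a` to `c`; when `a = c` it is the complement
of `{a}` (full circle minus the point). -/
def oArc (a c : S1) : Set S1 :=
  if a = c then {a}ᶜ else {b : S1 | 0 < pos1 (b - a) ∧ pos1 (b - a) < pos1 (c - a)}

/-- The closed positively-oriented arc from `a` to `c`; when `a = c` it is the whole circle. -/
def cArc (a c : S1) : Set S1 :=
  if a = c then Set.univ else {b : S1 | pos1 (b - a) ≤ pos1 (c - a)}

/-- A homeomorphism of the circle preserves orientation if it preserves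
(strict) positively-oriented arcs. -/
def OrientPres (f : S1 ≃ₜ S1) : Prop :=
  ∀ a b c : S1, b ∈ oArc a c → f b ∈ oArc (f a) (f c)

/-- A homeomorphism of the circle reverses orientation if it reverses
(strict) positively-oriented arcs. -/
def OrientRev (f : S1 ≃ₜ S1) : Prop :=
  ∀ a b c : S1, b ∈ oArc a c → f b ∈ oArc (f c) (f a)

/-- A gap of `μ` is a connected component of the complement of `μ`. -/
def IsGap (μ : Set S1) (I : Set S1) : Prop :=
  ∃ x ∈ μᶜ, I = connectedComponentIn μᶜ x

/-- The type of gaps of `μ`. -/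
abbrev Gap (μ : Set S1) : Type := {I : Set S1 // IsGap μ I}

/-- The data of the finite-order homeomorphism `τ : μ → μ`, of order `k`, fixed point free,
preserving the cyclic order, and such that the closed arcs `[τ^[i] x, τ^[i+1] x]` cover the
circle while the corresponding open arcs are pairwise disjoint. -/
structure TauData (μ : Set S1) (k : ℕ) : Type where
  τ : S1 → S1
  k_pos : 0 < k
  mapsTo : Set.MapsTo τ μ μ
  bijOn : Set.BijOn τ μ μ
  contOn : ContinuousOn τ μ
  fixfree : ∀ x ∈ μ, τ x ≠ x
  order_k : ∀ x ∈ μ, τ^[k] x = x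
  ordPres : ∀ x ∈ μ, ∀ y ∈ μ, ∀ z ∈ μ, y ∈ oArc x z → τ y ∈ oArc (τ x) (τ z)
  arcCover : ∀ x ∈ μ, (⋃ i ∈ Finset.range k, cArc (τ^[i] x) (τ^[i + 1] x)) = Set.univ
  arcDisj : ∀ x ∈ μ, ∀ i < k, ∀ j < k, i ≠ j →
    Disjoint (oArc (τ^[i] x) (τ^[i + 1] x)) (oArc (τ^[j] x) (τ^[j + 1] x))

/-- `ρ` is a `(μ,τ,σ)`-representation. -/
structure IsMTSRep {Γ : Type*} [Group Γ] (ρ : Γ →* (S1 ≃ₜ S1)) (μ : Set S1) (k : ℕ)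
    (T : TauData μ k) (σg : Γ →* Equiv.Perm (Gap μ)) : Prop where
  perfect : Perfect μ
  nonempty : μ.Nonempty
  invariant : ∀ γ : Γ, (ρ γ) '' μ = μ
  minimal : ∀ ν : Set S1, ν.Nonempty → IsClosed ν → (∀ γ : Γ, (ρ γ) '' ν ⊆ ν) → μ ⊆ ν
  orient : ∀ γ : Γ, OrientPres (ρ γ) ∨ OrientRev (ρ γ)
  commPres : ∀ γ : Γ, OrientPres (ρ γ) → ∀ x ∈ μ, ρ γ (T.τ x) = T.τ (ρ γ x)
  commRev : ∀ γ : Γ, OrientRev (ρ γ) → ∀ x ∈ μ, ρ γ (T.τ x) = (T.τ)^[k - 1] (ρ γ x)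
  gapAct : ∀ (γ : Γ) (I : Gap μ), ((σg γ I : Gap μ) : Set S1) = (ρ γ) '' (I : Set S1)

/-- The stabilizer in `Γ` of a gap `I`, for the action `σg` on gaps. -/
def gapStab {Γ : Type*} [Group Γ] {μ : Set S1} (σg : Γ →* Equiv.Perm (Gap μ)) (I : Gap μ) :
    Subgroup Γ where
  carrier := {γ : Γ | σg γ I = I}
  one_mem' := by simp
  mul_mem' := by
    intro x y hx hy
    have hx' : σg x I = I := hx
    have hy' : σg y I = I := hy
    show σg (x * y) I = I
    rw [map_mul, Equiv.Perm.mul_apply, hy', hx']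
  inv_mem' := by
    intro x hx
    have hx' : σg x I = I := hx
    show σg x⁻¹ I = I
    have h : σg x⁻¹ (σg x I) = I := by
      rw [← Equiv.Perm.mul_apply, ← map_mul]; simp
    rw [hx'] at h
    exact h

/-- The union `𝔍` of all the iterates of the gap `I₀`. -/
def gapOrbit {Γ : Type*} [Group Γ] {μ : Set S1} (σg : Γ →* Equiv.Perm (Gap μ))
    (I₀ : Gap μ) : Set S1 :=
  ⋃ γ : Γ, ((σg γ I₀ : Gap μ) : Set S1)

/-- `f` restricts to a homeomorphism of the closure of `I` (the closure being compact,
a continuous bijection of it is automatically a homeomorphism). -/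
def IsClosureHomeo (f : S1 → S1) (I : Set S1) : Prop :=
  ContinuousOn f (closure I) ∧ Set.BijOn f (closure I) (closure I)

/-- `ρ'` is a modification of `ρ` on the gap `I₀` by `f₀` (with respect to the
distinguished element `ci` generating the stabilizer of `I₀`). -/
structure IsModification {Γ : Type*} [Group Γ] (ρ ρ' : Γ →* (S1 ≃ₜ S1)) (μ : Set S1) (k : ℕ)
    (T : TauData μ k) (σg : Γ →* Equiv.Perm (Gap μ)) (I₀ : Gap μ) (ci : Γ)
    (f₀ : S1 → S1) : Prop where
  rep' : IsMTSRep ρ' μ k T σg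
  eq_off : ∀ (γ : Γ) (x : S1), x ∉ gapOrbit σg I₀ → ρ' γ x = ρ γ x
  on_gap : ∀ x ∈ (I₀ : Set S1), ρ' ci x = f₀ x

/-- The (finite) `τ`-orbit of a point. -/
def tauOrbit {μ : Set S1} {k : ℕ} (T : TauData μ k) (x : S1) : Set S1 :=
  {y : S1 | ∃ j < k, (T.τ)^[j] x = y}

/-- The limiting behaviour required of a subsequence in the (k)-convergence property:
there are two `τ`-orbits (of points `xm`, `xp` of `μ`) such that on each compact subset of
the open arc `]τ^[i] xm, τ^[i+1] xm[` the sequence converges uniformly to `τ^[i] xp`. -/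
def KConvSeq (F : ℕ → (S1 ≃ₜ S1)) (μ : Set S1) (k : ℕ) (τ : S1 → S1) : Prop :=
  ∃ xm ∈ μ, ∃ xp ∈ μ, ∀ i < k, ∀ K : Set S1,
    K ⊆ oArc (τ^[i] xm) (τ^[i + 1] xm) → IsCompact K →
      TendstoUniformlyOn (fun n x => (F n) x) (fun _ => τ^[i] xp) atTop K

/-- The (discrete) (k)-convergence property. -/
def HasKConv {Γ : Type*} [Group Γ] (ρ : Γ →* (S1 ≃ₜ S1)) (μ : Set S1) (k : ℕ)
    (τ : S1 → S1) : Prop :=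
  ∀ γs : ℕ → Γ, ∃ φ : ℕ → ℕ, StrictMono φ ∧
    ((∀ m n : ℕ, ρ (γs (φ m)) = ρ (γs (φ n))) ∨
      KConvSeq (fun n => ρ (γs (φ n))) μ k τ)

/-- The almost (k)-convergence property. -/
def HasAlmostKConv {Γ : Type*} [Group Γ] (ρ : Γ →* (S1 ≃ₜ S1)) (μ : Set S1) (k : ℕ)
    (τ : S1 → S1) (σg : Γ →* Equiv.Perm (Gap μ)) : Prop :=
  ∀ γs : ℕ → Γ, ∃ φ : ℕ → ℕ, StrictMono φ ∧
    ((∀ m n : ℕ, ρ (γs (φ m)) = ρ (γs (φ n))) ∨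
      (∃ a γ : Γ, (∃ I : Gap μ, σg γ I = I) ∧
        ∃ p : ℕ → ℤ, ∀ n : ℕ, ρ (γs (φ n)) = ρ (γ ^ (p n) * a)) ∨
      KConvSeq (fun n => ρ (γs (φ n))) μ k τ)

/-- `x` is a topologically attracting fixed point of `f`. -/
def TopAttracting (f : S1 → S1) (x : S1) : Prop :=
  f x = x ∧ ∃ U ∈ 𝓝 x, TendstoUniformlyOn (fun n y => f^[n] y) (fun _ => x) atTop U

/-- `x` is a topologically hyperbolic (attracting or repelling) fixed point of the
homeomorphism `f`. -/
def HypFixed (f : S1 ≃ₜ S1) (x : S1) : Prop :=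
  TopAttracting f x ∨ TopAttracting f.symm x

/-- `x` is a topologically attracting fixed point of `f` within the set `s`. -/
def TopAttractingOn (f : S1 → S1) (s : Set S1) (x : S1) : Prop :=
  f x = x ∧ ∃ U ∈ 𝓝[s] x, TendstoUniformlyOn (fun n y => f^[n] y) (fun _ => x) atTop U

/-- `ρ` is `μ`-faithful. -/
def MuFaithful {Γ : Type*} [Group Γ] (ρ : Γ →* (S1 ≃ₜ S1)) (μ : Set S1) : Prop :=
  ∀ γ : Γ, (∀ x ∈ μ, ρ γ x = x) → γ = 1

/-- `ρ` is non-elementary: it has no finite orbit in the circle. -/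
def NonElementary {Γ : Type*} [Group Γ] (ρ : Γ →* (S1 ≃ₜ S1)) : Prop :=
  ∀ x : S1, ¬ (Set.range fun γ : Γ => ρ γ x).Finite

/-- A presentation of a group `Γ` as the fundamental group of a compact 2-orbifold with
nonempty boundary:  generators `a i`, `b i` (handles, or crosscaps when non-orientable, in
which case the `b i` are trivial), torsion generators `d j` of orders `α j ≥ 2`, and
boundary generators `c i`, `q ≥ 1`, subject to the defining relations; being a presentation
is expressed by the universal lifting property. -/
structure OrbifoldPresentation (Γ : Type*) [Group Γ] : Type _ where
  orientable : Bool
  g : ℕ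
  p : ℕ
  q : ℕ
  a : Fin g → Γ
  b : Fin g → Γ
  d : Fin p → Γ
  c : Fin q → Γ
  α : Fin p → ℕ
  q_pos : 1 ≤ q
  α_two : ∀ j, 2 ≤ α j
  b_trivial : orientable = false → ∀ i, b i = 1
  rel_d : ∀ j, d j ^ (α j) = 1
  rel_long : (List.ofFn c).prod =
    (if orientable then (List.ofFn fun i => ⁅a i, b i⁆).prod
      else (List.ofFn fun i => (a i) ^ 2).prod) * (List.ofFn d).prod
  generates : Subgroup.closure
    (Set.range a ∪ Set.range b ∪ Set.range d ∪ Set.range c) = ⊤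
  liftUnique : ∀ (H : Type) (_ : Group H) (fa fb : Fin g → H) (fd : Fin p → H)
    (fc : Fin q → H),
    (orientable = false → ∀ i, fb i = 1) →
    (∀ j, fd j ^ (α j) = 1) →
    ((List.ofFn fc).prod =
      (if orientable then (List.ofFn fun i => ⁅fa i, fb i⁆).prod
        else (List.ofFn fun i => (fa i) ^ 2).prod) * (List.ofFn fd).prod) →
    ∃! φ : Γ →* H, (∀ i, φ (a i) = fa i) ∧ (∀ i, φ (b i) = fb i) ∧
      (∀ j, φ (d j) = fd j) ∧ (∀ i, φ (c i) = fc i)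


/-- `F : ℝ → ℝ` is a lift of the circle map `f` through the projection `ℝ → ℝ/ℤ`. -/
def IsLiftOf (F : ℝ → ℝ) (f : S1 → S1) : Prop :=
  ∀ x : ℝ, ((F x : ℝ) : S1) = f ((x : ℝ) : S1)

/-- Formal letters for words in the generators of an orbifold group presentation. -/
inductive OLetter (g p : ℕ) : Type
  | ga : Fin g → Bool → OLetter g p
  | gb : Fin g → Bool → OLetter g p
  | gd : Fin p → Bool → OLetter g p

/-- Evaluation of a letter in the group. -/
def evLetter {Γ : Type*} [Group Γ] (P : OrbifoldPresentation Γ) :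
    OLetter P.g P.p → Γ
  | .ga i bb => if bb then (P.a i)⁻¹ else P.a i
  | .gb i bb => if bb then (P.b i)⁻¹ else P.b i
  | .gd j bb => if bb then (P.d j)⁻¹ else P.d j

/-- Evaluation of a word (a list of letters), multiplying from left to right. -/
def evWord {Γ : Type*} [Group Γ] (P : OrbifoldPresentation Γ)
    (w : List (OLetter P.g P.p)) : Γ :=
  (w.map (evLetter P)).prod

/-- A word is admissible if, in the non-orientable case, it uses no `b`-letters. -/
def Admissible {Γ : Type*} [Group Γ] (P : OrbifoldPresentation Γ)
    (w : List (OLetter P.g P.p)) : Prop :=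
  P.orientable = false → ∀ l ∈ w, ∀ (i : Fin P.g) (bb : Bool), l ≠ OLetter.gb i bb

/-- The distinguished word `w₀` representing `c₁`:
`[a₁,b₁]⋯[a_g,b_g]d₁⋯d_p` in the orientable case, `a₁²⋯a_g²d₁⋯d_p` otherwise. -/
def w0 {Γ : Type*} [Group Γ] (P : OrbifoldPresentation Γ) : List (OLetter P.g P.p) :=
  (if P.orientable then
    (List.ofFn fun i : Fin P.g =>
      ([OLetter.ga i false, OLetter.gb i false, OLetter.ga i true, OLetter.gb i true] :
        List (OLetter P.g P.p))).flatten
   else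
    (List.ofFn fun i : Fin P.g =>
      ([OLetter.ga i false, OLetter.ga i false] : List (OLetter P.g P.p))).flatten)
  ++ (List.ofFn fun j : Fin P.p => OLetter.gd j false)

/-- The length `ℓ` of `w₀`. -/
def w0Len {Γ : Type*} [Group Γ] (P : OrbifoldPresentation Γ) : ℕ :=
  (if P.orientable then 4 * P.g else 2 * P.g) + P.p

/-- Iterated images `I_n` of the gap `I₀` under the successive elements of the list `l`:
`I_{n+1} = σ(l_n) I_n`. -/
def gapSeq {Γ : Type*} [Group Γ] {μ : Set S1} (σg : Γ →* Equiv.Perm (Gap μ))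
    (I₀ : Gap μ) (l : List Γ) : ℕ → Gap μ
  | 0 => I₀
  | n + 1 => σg (l.getD n 1) (gapSeq σg I₀ l n)

end PAFlow

/-! Since `I_n = σ(u_n) I₀` with `u_n = s_n ⋯ s₁`, a coincidence `I_i = I_j` (`i < j`) would put
`u_j⁻¹ u_i` in `⟨c₁⟩`; this is excluded inside `Γ̄` alone, by homomorphisms to small groups given
by the universal property of the presentation. Sending one handle to the generators of the integral
Heisenberg group (a cross-cap to `1 ∈ ℤ`) and everything else to `1` records how far `u_n` has
entered that handle; read on the last handle this forces the power of `c₁` to be `0`, and read on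
the handle containing `s_j` it separates `u_i` from `u_j`. A torsion generator sent to a root of
unity separates them when `s_j` is a `d`-letter. Without handles, `d₁` and `d_r` are sent to
rotations of `ℂ` about different centres: `u_i ↦ 1`, `u_j ↦ x`, `c₁ ↦ y x`, and `x⁻¹ ∈ ⟨y x⟩`
would make `x` and `y` commute. -/

namespace List

variable {G H : Type*} [Monoid G] [Monoid H]

def revPrefixProd (l : List G) (n : ℕ) : G := (l.take n).reverse.prod

@[simp] lemma revPrefixProd_zero (l : List G) : l.revPrefixProd 0 = 1 := rfl

lemma revPrefixProd_succ (l : List G) (n : ℕ) :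
    l.revPrefixProd (n + 1) = l.getD n 1 * l.revPrefixProd n := by
  rw [revPrefixProd, revPrefixProd, take_add_one, reverse_append, prod_append,
    getD_eq_getElem?_getD]
  cases l[n]? <;> simp

lemma revPrefixProd_reverse_length (l : List G) : l.reverse.revPrefixProd l.length = l.prod := by
  rw [revPrefixProd, ← length_reverse, take_length, reverse_reverse]

lemma map_revPrefixProd_eq_of_getD (φ : G →* H) (l : List G) (F : ℕ → H) (N : ℕ)
    (h₀ : F 0 = 1) (hstep : ∀ n < N, φ (l.getD n 1) * F n = F (n + 1)) :
    ∀ n ≤ N, φ (l.revPrefixProd n) = F n := by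
  intro n
  induction n with
  | zero => simp [h₀]
  | succ n ih => intro hn; rw [revPrefixProd_succ, map_mul, ih (by omega), hstep n (by omega)]

lemma map_getD_eq_one (φ : G →* H) {l : List G} (h : ∀ x ∈ l, φ x = 1) (n : ℕ) :
    φ (l.getD n 1) = 1 := by
  rw [getD_eq_getElem?_getD]
  cases hn : l[n]? with
  | none => simp
  | some x => exact h x (mem_of_getElem? hn)

lemma getElem?_flatten_of_length_eq {α : Type*} {m : ℕ} :
    ∀ (L : List (List α)), (∀ l ∈ L, l.length = m) → ∀ k e, e < m →
      L.flatten[m * k + e]? = L[k]?.bind (·[e]?)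
  | [], _, _, _, _ => by simp
  | l :: L, hL, k, e, he => by
    have hl : l.length = m := hL l mem_cons_self
    cases k with
    | zero => simp [getElem?_append_left (hl ▸ he : e < l.length)]
    | succ k =>
      rw [flatten_cons, getElem?_append_right (by rw [hl]; nlinarith), hl,
        show m * (k + 1) + e - m = m * k + e by rw [Nat.mul_succ]; omega,
        getElem?_flatten_of_length_eq L (fun l' h => hL l' (mem_cons_of_mem _ h)) k e he]
      simp

end List

lemma commute_of_inv_mem_zpowers {G : Type*} [Group G] {x y : G}
    (h : x⁻¹ ∈ Subgroup.zpowers (y * x)) : Commute x y := by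
  obtain ⟨m, hm⟩ := Subgroup.mem_zpowers_iff.mp h
  have hx : Commute (y * x) x := (Commute.inv_right_iff).mp (hm ▸ Commute.zpow_self _ m).symm
  exact (mul_right_cancel (hx.eq.trans (mul_assoc x y x).symm)).symm

lemma exists_units_pow_eq_one_ne_one {n : ℕ} (hn : 2 ≤ n) :
    ∃ ζ : ℂˣ, ζ ^ n = 1 ∧ ζ ≠ 1 := by
  have h := Complex.isPrimitiveRoot_exp n (by omega)
  refine ⟨h.isUnit (by omega) |>.unit, Units.ext (by simpa using h.pow_eq_one), fun h1 => ?_⟩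
  exact h.ne_one (by omega) (by simpa using congrArg Units.val h1)

lemma not_commute_homothety {ζ ξ : ℂˣ} (hζ : ζ ≠ 1) (hξ : ξ ≠ 1) :
    ¬ Commute (AffineEquiv.homothetyUnitsMulHom (1 : ℂ) ξ)
      (AffineEquiv.homothetyUnitsMulHom (0 : ℂ) ζ) := by
  intro h
  have h0 : (1 : ℂ) - ξ = ζ * (1 - ξ) := by
    simpa [AffineMap.homothety_apply, sub_eq_neg_add] using congrArg (fun f => f (0 : ℂ)) h.eq
  have : ((ζ : ℂ) - 1) * (1 - ξ) = 0 := by linear_combination -h0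
  rcases mul_eq_zero.mp this with h1 | h1
  · exact hζ (Units.val_eq_one.mp (sub_eq_zero.mp h1))
  · exact hξ (Units.val_eq_one.mp (sub_eq_zero.mp h1).symm)

@[ext] structure Heisenberg : Type where
  x : ℤ
  y : ℤ
  z : ℤ

namespace Heisenberg

instance : Mul Heisenberg := ⟨fun g h => ⟨g.x + h.x, g.y + h.y, g.z + h.z + g.x * h.y⟩⟩
instance : One Heisenberg := ⟨⟨0, 0, 0⟩⟩
instance : Inv Heisenberg := ⟨fun g => ⟨-g.x, -g.y, -g.z + g.x * g.y⟩⟩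

@[simp] lemma mul_x (g h : Heisenberg) : (g * h).x = g.x + h.x := rfl
@[simp] lemma mul_y (g h : Heisenberg) : (g * h).y = g.y + h.y := rfl
@[simp] lemma mul_z (g h : Heisenberg) : (g * h).z = g.z + h.z + g.x * h.y := rfl
@[simp] lemma one_x : (1 : Heisenberg).x = 0 := rfl
@[simp] lemma one_y : (1 : Heisenberg).y = 0 := rfl
@[simp] lemma one_z : (1 : Heisenberg).z = 0 := rfl
@[simp] lemma inv_x (g : Heisenberg) : g⁻¹.x = -g.x := rfl
@[simp] lemma inv_y (g : Heisenberg) : g⁻¹.y = -g.y := rfl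
@[simp] lemma inv_z (g : Heisenberg) : g⁻¹.z = -g.z + g.x * g.y := rfl

instance : Group Heisenberg where
  mul_assoc f g h := by ext <;> simp <;> ring
  one_mul g := by ext <;> simp
  mul_one g := by ext <;> simp
  inv_mul_cancel g := by ext <;> simp

lemma center_zpow (m : ℤ) : (⟨0, 0, 1⟩ : Heisenberg) ^ m = ⟨0, 0, m⟩ := by
  induction m using Int.induction_on with
  | zero => rfl
  | succ n ih => rw [zpow_add_one, ih]; ext <;> simp
  | pred n ih => rw [zpow_sub_one, ih]; ext <;> simp [sub_eq_add_neg]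

/-- The letters `b⁻¹, a⁻¹, b, a` of a handle `[a, b]`, in the order `u_n` absorbs them, under
`a ↦ (1, 0, 0)`, `b ↦ (0, 1, 0)`. -/
def handle : List Heisenberg := [⟨0, 1, 0⟩⁻¹, ⟨1, 0, 0⟩⁻¹, ⟨0, 1, 0⟩, ⟨1, 0, 0⟩]

lemma handle_revPrefixProd_four : handle.revPrefixProd 4 = ⟨0, 0, 1⟩ := by
  ext <;> simp [handle, List.revPrefixProd]

lemma handle_revPrefixProd_injOn {e e' : ℕ} (he : e ≤ 4) (he' : e' ≤ 4)
    (h : handle.revPrefixProd e = handle.revPrefixProd e') : e = e' := by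
  interval_cases e <;> interval_cases e' <;>
    simp_all [handle, List.revPrefixProd, Heisenberg.ext_iff]

lemma eq_zero_of_handle_revPrefixProd_eq {e e' : ℕ} (he : e < 4) (he' : e' < 4) {m : ℤ}
    (h : handle.revPrefixProd e = handle.revPrefixProd e' * handle.revPrefixProd 4 ^ m) :
    m = 0 := by
  rw [handle_revPrefixProd_four, center_zpow] at h
  interval_cases e <;> interval_cases e' <;>
    simp_all [handle, List.revPrefixProd, Heisenberg.ext_iff]

end Heisenberg

section CrossCap

open Multiplicative

def crossCap : List (Multiplicative ℤ) := [ofAdd 1, ofAdd 1]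

lemma crossCap_revPrefixProd {e : ℕ} (he : e ≤ 2) :
    crossCap.revPrefixProd e = ofAdd (e : ℤ) := by
  interval_cases e <;> rfl

lemma crossCap_revPrefixProd_injOn {e e' : ℕ} (he : e ≤ 2) (he' : e' ≤ 2)
    (h : crossCap.revPrefixProd e = crossCap.revPrefixProd e') : e = e' := by
  rw [crossCap_revPrefixProd he, crossCap_revPrefixProd he'] at h
  exact_mod_cast ofAdd.injective h

lemma eq_zero_of_crossCap_revPrefixProd_eq {e e' : ℕ} (he : e < 2) (he' : e' < 2) {m : ℤ}
    (h : crossCap.revPrefixProd e = crossCap.revPrefixProd e' * crossCap.revPrefixProd 2 ^ m) :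
    m = 0 := by
  rw [crossCap_revPrefixProd he.le, crossCap_revPrefixProd he'.le, crossCap_revPrefixProd le_rfl,
    ← ofAdd_zsmul, ← ofAdd_add] at h
  have := ofAdd.injective h
  rw [smul_eq_mul] at this
  omega

end CrossCap

namespace PAFlow

lemma gapSeq_eq_revPrefixProd {Γ : Type*} [Group Γ] {μ : Set S1}
    (σg : Γ →* Equiv.Perm (Gap μ)) (I₀ : Gap μ) (l : List Γ) (n : ℕ) :
    gapSeq σg I₀ l n = σg (l.revPrefixProd n) I₀ := by
  induction n with
  | zero => simp [gapSeq]
  | succ n ih => rw [gapSeq, ih, List.revPrefixProd_succ, map_mul, Equiv.Perm.mul_apply]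

lemma inv_mul_mem_gapStab_of_eq {Γ : Type*} [Group Γ] {μ : Set S1}
    (σg : Γ →* Equiv.Perm (Gap μ)) {I : Gap μ} {g h : Γ} (heq : σg g I = σg h I) :
    h⁻¹ * g ∈ gapStab σg I := by
  show σg (h⁻¹ * g) I = I
  rw [map_mul, Equiv.Perm.mul_apply, heq, ← Equiv.Perm.mul_apply, ← map_mul, inv_mul_cancel,
    map_one, Equiv.Perm.one_apply]

namespace OrbifoldPresentation

variable {Γ : Type} [Group Γ] (P : OrbifoldPresentation Γ)

/-- `s₁, s₂, …, s_ℓ`, reading `w₀ = s_ℓ ⋯ s₁` from the right; so `w0Suffix n = s_n ⋯ s₁`, and in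
it come first `d_p, …, d₁`, then the handles from the `g`-th down to the first. -/
def letters : List Γ := ((w0 P).map (evLetter P)).reverse

def w0Suffix (n : ℕ) : Γ := P.letters.revPrefixProd n

def handleWord (i : Fin P.g) : List (OLetter P.g P.p) :=
  if P.orientable then [.ga i false, .gb i false, .ga i true, .gb i true]
  else [.ga i false, .ga i false]

def handleLen : ℕ := if P.orientable then 4 else 2

lemma handleLen_pos : 0 < P.handleLen := by unfold handleLen; split <;> norm_num

lemma length_handleWord (i : Fin P.g) : (P.handleWord i).length = P.handleLen := by
  unfold handleWord handleLen; split <;> rfl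

lemma w0_eq : w0 P = (List.ofFn P.handleWord).flatten ++ List.ofFn fun j => .gd j false := by
  unfold w0 handleWord; split <;> rfl

lemma w0Len_eq : w0Len P = P.handleLen * P.g + P.p := by
  unfold w0Len handleLen; split <;> ring

lemma length_flatten_handleWord :
    (List.ofFn P.handleWord).flatten.length = P.handleLen * P.g := by
  simp [List.length_flatten, List.map_ofFn, Function.comp_def, length_handleWord, mul_comm]

lemma length_w0 : (w0 P).length = w0Len P := by
  rw [w0_eq, w0Len_eq, List.length_append, length_flatten_handleWord, List.length_ofFn]

lemma w0_getElem?_handle (t : Fin P.g) {e : ℕ} (he : e < P.handleLen) :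
    (w0 P)[P.handleLen * t + e]? = (P.handleWord t)[e]? := by
  have ht := t.isLt
  have : P.handleLen * t + e < P.handleLen * P.g := by nlinarith
  rw [w0_eq, List.getElem?_append_left (by rwa [length_flatten_handleWord]),
    List.getElem?_flatten_of_length_eq _ (by simp [length_handleWord]) _ _ he]
  simp

lemma w0_getElem?_d (j : Fin P.p) :
    (w0 P)[P.handleLen * P.g + j]? = some (.gd j false) := by
  rw [w0_eq, List.getElem?_append_right (by rw [length_flatten_handleWord]; omega),
    length_flatten_handleWord]
  simp

lemma letters_getElem? {n : ℕ} (hn : n < w0Len P) :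
    P.letters[n]? = ((w0 P)[w0Len P - 1 - n]?).map (evLetter P) := by
  rw [letters, List.getElem?_reverse (by simp [length_w0, hn])]
  simp [length_w0]

lemma letters_getD_of_lt_p {n : ℕ} (hn : n < P.p) :
    P.letters.getD n 1 = P.d ⟨P.p - 1 - n, by omega⟩ := by
  have hℓ := P.w0Len_eq
  rw [List.getD_eq_getElem?_getD, P.letters_getElem? (by omega),
    show w0Len P - 1 - n = P.handleLen * P.g + (P.p - 1 - n) by omega,
    P.w0_getElem?_d ⟨P.p - 1 - n, by omega⟩]
  rfl

lemma letters_getD_handle (t : Fin P.g) {e : ℕ} (he : e < P.handleLen) :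
    P.letters.getD (P.p + P.handleLen * (P.g - 1 - t) + e) 1 =
      ((P.handleWord t).map (evLetter P)).reverse.getD e 1 := by
  have hℓ := P.w0Len_eq
  have ht := t.isLt
  have : P.handleLen * (P.g - 1 - t) + P.handleLen * t + P.handleLen = P.handleLen * P.g := by
    rw [← Nat.mul_add, ← Nat.mul_succ]; congr 1; omega
  rw [List.getD_eq_getElem?_getD, P.letters_getElem? (by omega),
    show w0Len P - 1 - (P.p + P.handleLen * (P.g - 1 - t) + e) =
      P.handleLen * t + (P.handleLen - 1 - e) by omega,
    P.w0_getElem?_handle t (by omega), List.getD_eq_getElem?_getD,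
    List.getElem?_reverse (by simp [length_handleWord, he])]
  simp [length_handleWord]

lemma exists_handle_of_le {n : ℕ} (h₁ : P.p ≤ n) (h₂ : n < w0Len P) :
    ∃ t : Fin P.g, ∃ e < P.handleLen, n = P.p + P.handleLen * (P.g - 1 - t) + e := by
  have hℓ := P.w0Len_eq
  have hpos := P.handleLen_pos
  have hs : (n - P.p) / P.handleLen < P.g := Nat.div_lt_of_lt_mul (by omega)
  have hdiv := Nat.div_add_mod (n - P.p) P.handleLen
  have hmod := Nat.mod_lt (n - P.p) hpos
  generalize (n - P.p) / P.handleLen = s at hs hdiv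
  generalize (n - P.p) % P.handleLen = e at hdiv hmod
  refine ⟨⟨P.g - 1 - s, by omega⟩, e, hmod, ?_⟩
  simp only
  rw [show P.g - 1 - (P.g - 1 - s) = s by omega]
  omega

lemma exists_hom (hq : P.q = 1) {H : Type} [Group H] (fa fb : Fin P.g → H) (fd : Fin P.p → H)
    (hb : P.orientable = false → ∀ i, fb i = 1) (hd : ∀ j, fd j ^ P.α j = 1) :
    ∃ φ : Γ →* H,
      (∀ i, φ (P.a i) = fa i) ∧ (∀ i, φ (P.b i) = fb i) ∧ ∀ j, φ (P.d j) = fd j := by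
  obtain ⟨φ, ⟨ha', hb', hd', -⟩, -⟩ := P.liftUnique H inferInstance fa fb fd
    (fun _ => (if P.orientable then (List.ofFn fun i => ⁅fa i, fb i⁆).prod
      else (List.ofFn fun i => fa i ^ 2).prod) * (List.ofFn fd).prod) hb hd
    (by rw [List.ofFn_const, List.prod_replicate, hq, pow_one])
  exact ⟨φ, ha', hb', hd'⟩

lemma prod_map_handleWord (i : Fin P.g) :
    ((P.handleWord i).map (evLetter P)).prod =
      if P.orientable then ⁅P.a i, P.b i⁆ else P.a i ^ 2 := by
  unfold handleWord; split <;> simp [evLetter, commutatorElement_def, sq, mul_assoc]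

lemma c_eq_w0Suffix (hq : P.q = 1) : P.c ⟨0, P.q_pos⟩ = P.w0Suffix (w0Len P) := by
  have hc : List.ofFn P.c = [P.c ⟨0, P.q_pos⟩] :=
    List.ext_getElem (by simp [hq]) fun n h₁ _ => by
      simp only [List.length_ofFn] at h₁
      simp [show n = 0 by omega]
  have hrel := P.rel_long
  rw [hc, List.prod_singleton] at hrel
  rw [hrel, w0Suffix, letters, ← P.length_w0, ← List.length_map (f := evLetter P),
    List.revPrefixProd_reverse_length, w0_eq, List.map_append, List.prod_append, List.map_flatten,
    List.prod_flatten, List.map_ofFn, List.map_ofFn]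
  congr 1
  · by_cases ho : P.orientable <;> simp [ho, Function.comp_def, prod_map_handleWord]
  · simp [Function.comp_def, evLetter]

section Homomorphisms

variable {H : Type} [Group H]

lemma map_eq_one_of_mem_handleWord (φ : Γ →* H) {s : Fin P.g} (ha : φ (P.a s) = 1)
    (hb : φ (P.b s) = 1) : ∀ x ∈ (P.handleWord s).map (evLetter P), φ x = 1 := by
  unfold handleWord
  split <;> simp [evLetter, ha, hb]

lemma map_letters_getD_eq_one_of_le (φ : Γ →* H) (ha : ∀ i, φ (P.a i) = 1)
    (hb : ∀ i, φ (P.b i) = 1) {n : ℕ} (h₁ : P.p ≤ n) (h₂ : n < w0Len P) :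
    φ (P.letters.getD n 1) = 1 := by
  obtain ⟨t, e, he, rfl⟩ := P.exists_handle_of_le h₁ h₂
  rw [P.letters_getD_handle t he]
  exact List.map_getD_eq_one φ (fun x hx =>
    P.map_eq_one_of_mem_handleWord φ (ha t) (hb t) x (List.mem_reverse.mp hx)) e

lemma map_w0Suffix_of_handle (t : Fin P.g) (φ : Γ →* H) (hd : ∀ j, φ (P.d j) = 1)
    (hother : ∀ s ≠ t, ∀ x ∈ (P.handleWord s).map (evLetter P), φ x = 1) :
    ∀ n ≤ w0Len P, φ (P.w0Suffix n) =
      (((P.handleWord t).map (evLetter P)).reverse.map φ).revPrefixProd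
        (n - (P.p + P.handleLen * (P.g - 1 - t))) := by
  set L := ((P.handleWord t).map (evLetter P)).reverse.map φ
  set off := P.p + P.handleLen * (P.g - 1 - t)
  have hL : L.length = P.handleLen := by simp [L, length_handleWord]
  have before : ∀ n, n + 1 ≤ off →
      L.revPrefixProd (n + 1 - off) = L.revPrefixProd (n - off) := by
    intro n hn; rw [show n + 1 - off = 0 by omega, show n - off = 0 by omega]
  have inside : ∀ n, off ≤ n →
      L.revPrefixProd (n + 1 - off) = L.getD (n - off) 1 * L.revPrefixProd (n - off) := by
    intro n hn; rw [show n + 1 - off = n - off + 1 by omega, List.revPrefixProd_succ]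
  refine List.map_revPrefixProd_eq_of_getD φ _ _ _ (by simp) fun n hn => ?_
  rcases lt_or_ge n P.p with hnp | hnp
  · rw [P.letters_getD_of_lt_p hnp, hd, one_mul, before n (by omega)]
  obtain ⟨s, e, he, rfl⟩ := P.exists_handle_of_le hnp hn
  rw [P.letters_getD_handle s he]
  rcases lt_trichotomy s t with hst | rfl | hst
  · have : off + P.handleLen ≤ P.p + P.handleLen * (P.g - 1 - s) + e := by
      have := Nat.mul_le_mul_left P.handleLen (show P.g - 1 - t + 1 ≤ P.g - 1 - s by omega)
      rw [Nat.mul_succ] at this; omega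
    rw [List.map_getD_eq_one φ (by simpa using hother s hst.ne) e, one_mul, inside _ (by omega),
      List.getD_eq_default _ _ (by omega), one_mul]
  · rw [inside _ (by omega), show P.p + P.handleLen * (P.g - 1 - s) + e - off = e by omega,
      ← map_one φ, List.getD_map]
  · have : P.p + P.handleLen * (P.g - 1 - s) + P.handleLen ≤ off := by
      have := Nat.mul_le_mul_left P.handleLen (show P.g - 1 - s + 1 ≤ P.g - 1 - t by omega)
      rw [Nat.mul_succ] at this; omega
    rw [List.map_getD_eq_one φ (by simpa using hother s hst.ne') e, one_mul, before _ (by omega)]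

end Homomorphisms

lemma exists_hom_tracking_handle (hq : P.q = 1) (t : Fin P.g) :
    ∃ (H : Type) (_ : Group H) (φ : Γ →* H) (V : ℕ → H),
      (∀ n ≤ w0Len P, φ (P.w0Suffix n) = V (n - (P.p + P.handleLen * (P.g - 1 - t)))) ∧
      (∀ e ≤ P.handleLen, ∀ e' ≤ P.handleLen, V e = V e' → e = e') ∧
      ∀ e < P.handleLen, ∀ e' < P.handleLen, ∀ m : ℤ,
        V e = V e' * V P.handleLen ^ m → m = 0 := by
  by_cases ho : P.orientable
  · obtain ⟨φ, ha, hb, hd⟩ := P.exists_hom hq (Pi.mulSingle t (⟨1, 0, 0⟩ : Heisenberg))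
      (Pi.mulSingle t ⟨0, 1, 0⟩) 1 (by simp [ho]) fun _ => by simp
    have hL : ((P.handleWord t).map (evLetter P)).reverse.map φ = Heisenberg.handle := by
      simp [handleWord, ho, evLetter, ha, hb, Heisenberg.handle]
    have hlen : P.handleLen = 4 := by simp [handleLen, ho]
    refine ⟨Heisenberg, inferInstance, φ, Heisenberg.handle.revPrefixProd, ?_, ?_, ?_⟩
    · rw [← hL]
      exact P.map_w0Suffix_of_handle t φ (by simp [hd]) fun s hs =>
        P.map_eq_one_of_mem_handleWord φ (by simp [ha, hs]) (by simp [hb, hs])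
    · rw [hlen]; exact fun e he e' he' => Heisenberg.handle_revPrefixProd_injOn he he'
    · rw [hlen]; exact fun e he e' he' m => Heisenberg.eq_zero_of_handle_revPrefixProd_eq he he'
  · obtain ⟨φ, ha, hb, hd⟩ := P.exists_hom hq
      (Pi.mulSingle t (Multiplicative.ofAdd (1 : ℤ))) 1 1 (fun _ _ => rfl) fun _ => by simp
    have hL : ((P.handleWord t).map (evLetter P)).reverse.map φ = crossCap := by
      simp [handleWord, ho, evLetter, ha, crossCap]
    have hlen : P.handleLen = 2 := by simp [handleLen, ho]
    refine ⟨Multiplicative ℤ, inferInstance, φ, crossCap.revPrefixProd, ?_, ?_, ?_⟩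
    · rw [← hL]
      exact P.map_w0Suffix_of_handle t φ (by simp [hd]) fun s hs =>
        P.map_eq_one_of_mem_handleWord φ (by simp [ha, hs]) (by simp [hb])
    · rw [hlen]; exact fun e he e' he' => crossCap_revPrefixProd_injOn he he'
    · rw [hlen]; exact fun e he e' he' m => eq_zero_of_crossCap_revPrefixProd_eq he he'

lemma exists_hom_tracking_torsion (hq : P.q = 1) (r : Fin P.p) :
    ∃ (H : Type) (_ : Group H) (φ : Γ →* H) (x : H), x ≠ 1 ∧
      ∀ n ≤ w0Len P, φ (P.w0Suffix n) = if P.p - r ≤ n then x else 1 := by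
  obtain ⟨ζ, hζ, hζ1⟩ := exists_units_pow_eq_one_ne_one (P.α_two r)
  obtain ⟨φ, ha, hb, hd⟩ := P.exists_hom hq 1 1 (Pi.mulSingle r ζ) (fun _ _ => rfl) fun j => by
    by_cases hj : j = r
    · subst hj; simpa using hζ
    · simp [hj]
  refine ⟨ℂˣ, inferInstance, φ, ζ, hζ1,
    List.map_revPrefixProd_eq_of_getD φ _ _ _ (if_neg (by omega)) fun n hn => ?_⟩
  rcases lt_or_ge n P.p with hnp | hnp
  · rw [P.letters_getD_of_lt_p hnp, hd]
    by_cases hnr : P.p - 1 - n = r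
    · rw [show (⟨P.p - 1 - n, _⟩ : Fin P.p) = r from Fin.ext hnr, Pi.mulSingle_eq_same,
        if_neg (by omega), if_pos (by omega), mul_one]
    · rw [Pi.mulSingle_eq_of_ne (fun h => hnr (congrArg Fin.val h)), one_mul]
      simp only [show P.p - r ≤ n ↔ P.p - r ≤ n + 1 by omega]
  · rw [P.map_letters_getD_eq_one_of_le φ (by simp [ha]) (by simp [hb]) hnp hn, one_mul,
      if_pos (by omega), if_pos (by omega)]

lemma exists_hom_noncommuting_of_g_eq_zero (hq : P.q = 1) (hg : P.g = 0) (r : Fin P.p)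
    (hr : 0 < (r : ℕ)) :
    ∃ (H : Type) (_ : Group H) (φ : Γ →* H) (x y : H), ¬ Commute x y ∧
      φ (P.c ⟨0, P.q_pos⟩) = y * x ∧
      ∀ n < P.p, φ (P.w0Suffix n) = if P.p - r ≤ n then x else 1 := by
  have hℓ : w0Len P = P.p := by simp [w0Len_eq, hg]
  have hrp := r.isLt
  obtain ⟨ζ, hζ, hζ1⟩ := exists_units_pow_eq_one_ne_one (P.α_two ⟨0, by omega⟩)
  obtain ⟨ξ, hξ, hξ1⟩ := exists_units_pow_eq_one_ne_one (P.α_two r)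
  set x := AffineEquiv.homothetyUnitsMulHom (1 : ℂ) ξ
  set y := AffineEquiv.homothetyUnitsMulHom (0 : ℂ) ζ
  set fd : Fin P.p → ℂ ≃ᵃ[ℂ] ℂ := fun j => if (j : ℕ) = 0 then y else if j = r then x else 1
  obtain ⟨φ, -, -, hd⟩ := P.exists_hom hq 1 1 fd (fun _ _ => rfl) fun j => by
    simp only [fd]
    split_ifs with h₀ hr
    · rw [show j = ⟨0, by omega⟩ from Fin.ext h₀, ← map_pow, hζ, map_one]
    · rw [hr, ← map_pow, hξ, map_one]
    · exact one_pow _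
  have hφ : ∀ n ≤ P.p, φ (P.w0Suffix n) =
      if n = P.p then y * x else if P.p - r ≤ n then x else 1 := by
    refine List.map_revPrefixProd_eq_of_getD φ _ _ _
      (by rw [if_neg (by omega), if_neg (by omega)]) fun n hn => ?_
    rw [P.letters_getD_of_lt_p hn, hd]
    simp only [fd]
    by_cases h₀ : P.p - 1 - n = 0
    · rw [if_pos h₀, if_neg (by omega), if_pos (by omega), if_pos (by omega)]
    rw [if_neg h₀, if_neg (by omega : n + 1 ≠ P.p), if_neg (by omega : n ≠ P.p)]
    by_cases hnr : P.p - 1 - n = r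
    · rw [if_pos (Fin.ext hnr), if_neg (by omega), if_pos (by omega), mul_one]
    · rw [if_neg (fun h => hnr (congrArg Fin.val h)), one_mul]
      simp only [show P.p - r ≤ n ↔ P.p - r ≤ n + 1 by omega]
  refine ⟨_, inferInstance, φ, x, y, not_commute_homothety hζ1 hξ1, ?_, fun n hn => ?_⟩
  · rw [P.c_eq_w0Suffix hq, hℓ, hφ _ le_rfl, if_pos rfl]
  · rw [hφ n hn.le, if_neg hn.ne]

lemma w0Suffix_ne_mul_zpow_of_g_eq_zero (hq : P.q = 1) (hg : P.g = 0) {i j : ℕ} (hij : i < j)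
    (hj : j < w0Len P) (m : ℤ) : P.w0Suffix i ≠ P.w0Suffix j * P.c ⟨0, P.q_pos⟩ ^ m := by
  have hℓ : w0Len P = P.p := by simp [w0Len_eq, hg]
  obtain ⟨H, _, φ, x, y, hxy, hc, hφ⟩ :=
    P.exists_hom_noncommuting_of_g_eq_zero hq hg ⟨P.p - j, by omega⟩ (by simp only; omega)
  intro h
  have h' := congrArg φ h
  rw [map_mul, map_zpow, hc, hφ i (by omega), hφ j (by omega), if_neg (by simp only; omega),
    if_pos (by simp only; omega)] at h'
  exact hxy (commute_of_inv_mem_zpowers ⟨m, eq_inv_of_mul_eq_one_right h'.symm⟩)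

lemma eq_zero_of_w0Suffix_eq_mul_zpow (hq : P.q = 1) (hg : 0 < P.g) {i j : ℕ}
    (hi : i < w0Len P) (hj : j < w0Len P) {m : ℤ}
    (h : P.w0Suffix i = P.w0Suffix j * P.c ⟨0, P.q_pos⟩ ^ m) : m = 0 := by
  obtain ⟨H, _, φ, V, hφ, -, hcoset⟩ := P.exists_hom_tracking_handle hq ⟨0, hg⟩
  simp only [Nat.sub_zero] at hφ
  have hpos := P.handleLen_pos
  have hℓ : w0Len P = P.p + P.handleLen * (P.g - 1) + P.handleLen := by
    obtain ⟨g, hg⟩ : ∃ g, P.g = g + 1 := ⟨P.g - 1, by omega⟩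
    rw [w0Len_eq, hg, Nat.add_sub_cancel]; ring
  have hc : φ (P.c ⟨0, P.q_pos⟩) = V P.handleLen := by
    rw [P.c_eq_w0Suffix hq, hφ _ le_rfl]; congr 1; omega
  have h' := congrArg φ h
  rw [map_mul, map_zpow, hc, hφ i hi.le, hφ j hj.le] at h'
  exact hcoset _ (by omega) _ (by omega) m h'

lemma w0Suffix_ne_of_lt (hq : P.q = 1) {i j : ℕ} (hij : i < j) (hj : j ≤ w0Len P) :
    P.w0Suffix i ≠ P.w0Suffix j := by
  intro h
  rcases le_or_gt j P.p with hjp | hjp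
  · obtain ⟨H, _, φ, x, hx, hφ⟩ := P.exists_hom_tracking_torsion hq ⟨P.p - j, by omega⟩
    have h' := congrArg φ h
    rw [hφ i (by omega), hφ j hj, if_neg (by simp only; omega),
      if_pos (by simp only; omega)] at h'
    exact hx h'.symm
  · obtain ⟨t, e, he, hje⟩ := P.exists_handle_of_le (n := j - 1) (by omega) (by omega)
    obtain ⟨H, _, φ, V, hφ, hinj, -⟩ := P.exists_hom_tracking_handle hq t
    have h' := congrArg φ h
    rw [hφ i (by omega), hφ j hj] at h'
    have := hinj _ (by omega) _ (by omega) h'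
    omega

lemma inv_mul_w0Suffix_not_mem_zpowers (hq : P.q = 1) {i j : ℕ} (hij : i < j)
    (hj : j < w0Len P) :
    (P.w0Suffix j)⁻¹ * P.w0Suffix i ∉ Subgroup.zpowers (P.c ⟨0, P.q_pos⟩) := by
  intro hmem
  obtain ⟨m, hm⟩ := Subgroup.mem_zpowers_iff.mp hmem
  have h : P.w0Suffix i = P.w0Suffix j * P.c ⟨0, P.q_pos⟩ ^ m := by rw [hm, mul_inv_cancel_left]
  rcases Nat.eq_zero_or_pos P.g with hg | hg
  · exact P.w0Suffix_ne_mul_zpow_of_g_eq_zero hq hg hij hj m h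
  obtain rfl := P.eq_zero_of_w0Suffix_eq_mul_zpow hq hg (hij.trans hj) hj h
  rw [zpow_zero, mul_one] at h
  exact P.w0Suffix_ne_of_lt hq hij hj.le h

end OrbifoldPresentation

end PAFlow

open PAFlow in
theorem statement14_general {Γ : Type} [Group Γ] (P : OrbifoldPresentation Γ)
    (hq : P.q = 1) (μ : Set S1) (σg : Γ →* Equiv.Perm (Gap μ)) (I₀ : Gap μ)
    (hstab : gapStab σg I₀ = Subgroup.zpowers (P.c ⟨0, P.q_pos⟩)) :
    ∀ i j : ℕ, i < w0Len P → j < w0Len P → i ≠ j →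
      gapSeq σg I₀ (((w0 P).map (evLetter P)).reverse) i ≠
      gapSeq σg I₀ (((w0 P).map (evLetter P)).reverse) j := by
  intro i j hi hj hij
  wlog hlt : i < j generalizing i j
  · exact (this j i hj hi hij.symm (by omega)).symm
  rw [gapSeq_eq_revPrefixProd, gapSeq_eq_revPrefixProd]
  intro heq
  exact P.inv_mul_w0Suffix_not_mem_zpowers hq hlt hj (hstab ▸ inv_mul_mem_gapStab_of_eq σg heq)

open PAFlow in
/-- writing `c₁ = s_ℓ ⋯ s₁` (the word `w₀`), the successive images
`I_i = σ(s_i) I_{i-1}` of a periodic gap `I₀` whose stabilizer is the cyclic subgroup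
generated by `c₁` are pairwise distinct for `0 ≤ i ≤ ℓ - 1`. -/
theorem statement14 {Γ : Type} [Group Γ] (P : OrbifoldPresentation Γ)
    (hq : P.q = 1) (hgp : 1 ≤ P.g ∨ (P.g = 0 ∧ 2 ≤ P.p))
    (ρ : Γ →* (S1 ≃ₜ S1)) (μ : Set S1) (k : ℕ)
    (T : TauData μ k) (σg : Γ →* Equiv.Perm (Gap μ))
    (hrep : IsMTSRep ρ μ k T σg)
    (I₀ : Gap μ) (hper : gapStab σg I₀ ≠ ⊥)
    (hstab : gapStab σg I₀ = Subgroup.zpowers (P.c ⟨0, P.q_pos⟩)) :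
    ∀ i j : ℕ, i < w0Len P → j < w0Len P → i ≠ j →
      gapSeq σg I₀ (((w0 P).map (evLetter P)).reverse) i ≠
      gapSeq σg I₀ (((w0 P).map (evLetter P)).reverse) j :=
  statement14_general P hq μ σg I₀ hstab
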